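/- arXiv:1302.2991 — 4 statements merged into one kernel-verified Lean document; each statement's English description precedes it below -/
import Mathlib

section
/- Let 𝒵 be a noetherian abelian category of homological dimension at most n (n a non-negative integer) and let T be an object of 𝒵. For 0 ≤ i ≤ n set B_i := {E ∈ 𝒵 : Ext^i(T,E) = 0}. For 1 ≤ i ≤ n set 𝒯_i := [B_i ∩ B_{i+1} ∩ … ∩ B_n] and ℱ_i := 𝒯_i°, and set 𝒯_{n+1} := 𝒵 and ℱ_0 := 𝒵. Then every object E of 𝒵 admits a unique filtration 0 = E_0 ⊆ E_1 ⊆ … ⊆ E_n ⊆ E_{n+1} = E such that for all 1 ≤ i ≤ n+1 one has E_i ∈ 𝒯_i and E_i/E_{i-1} ∈ 𝒯_i ∩ ℱ_{i-1}. Moreover each subcategory 𝒯_i ∩ ℱ_{i-1} is closed under extensions, and for i ≠ j the only object lying in both 𝒯_i ∩ ℱ_{i-1} and 𝒯_j ∩ ℱ_{j-1} is the zero object. -/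
/-!
Each `𝒯_i` is a torsion class (it contains `0` and is closed under quotients and extensions),
and `𝒯_1 ⊆ ⋯ ⊆ 𝒯_{n+1} = 𝒵`. In a noetherian object `E`, a maximal subobject `m` lying in a
torsion class `𝒯` satisfies `E / m ∈ 𝒯°`: for `V ∈ 𝒯` and `h : V ⟶ E / m`, the preimage of `im h`
in `E` is an extension of `im h` by `m`, hence equals `m`, so `h = 0`. Consequently `m` is the
largest subobject of `E` in `𝒯`, and taking `E_i` to be the largest subobject in `𝒯_i` gives the
filtration. Conversely, in any such filtration `E_i` is this largest subobject: descending from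
`E_{n+1} = E`, a subobject `A ∈ 𝒯_i` with `A ⊆ E_{j+1}` lies in `E_j` for `j ≥ i`, because
`A ∈ 𝒯_j` and `E_{j+1}/E_j ∈ 𝒯_j°`. The rest follows from `𝒯°` being closed under extensions
and `𝒯 ∩ 𝒯° = 0`.
-/

open CategoryTheory Limits Abelian

namespace TorsionPairs

universe w w' v u v' u'

variable {C : Type u} [Category.{v} C] [Abelian C]

/-- `f : X ⟶ Y` and `g : Y ⟶ Z` form a short exact sequence `0 ⟶ X ⟶ Y ⟶ Z ⟶ 0` in `C`. -/
def IsShortExactSeq {X Y Z : C} (f : X ⟶ Y) (g : Y ⟶ Z) : Prop :=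
  ∃ w : f ≫ g = 0, (ShortComplex.mk f g w).ShortExact

/-- The right perpendicular class `𝒱°` of a class of objects `𝒱` (given as a predicate):
the objects `E` with `Hom(V, E) = 0` for all `V ∈ 𝒱`. -/
def Perp (P : C → Prop) : C → Prop := fun E => ∀ (V : C), P V → ∀ f : V ⟶ E, f = 0

/-- A class of objects is closed under quotient objects. -/
def ClosedUnderQuotients (P : C → Prop) : Prop :=
  ∀ ⦃X Q : C⦄ (p : X ⟶ Q), Epi p → P X → P Q

/-- A class of objects is closed under extensions. -/
def ClosedUnderExt (P : C → Prop) : Prop :=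
  ∀ ⦃X E Y : C⦄ (f : X ⟶ E) (g : E ⟶ Y), IsShortExactSeq f g → P X → P Y → P E

/-- `(T, F)` is a torsion pair in the abelian category `C`: `Hom(X, Y) = 0` whenever
`T X` and `F Y`, and every object `E` fits into a short exact sequence
`0 ⟶ X ⟶ E ⟶ Y ⟶ 0` with `T X` and `F Y`. -/
def IsTorsionPair (T F : C → Prop) : Prop :=
  (∀ (X Y : C), T X → F Y → ∀ f : X ⟶ Y, f = 0) ∧
  (∀ E : C, ∃ (X Y : C) (f : X ⟶ E) (g : E ⟶ Y), T X ∧ F Y ∧ IsShortExactSeq f g)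

/-- The extension closure of a class of objects: the smallest class of objects containing
the zero objects and the given class, and closed under extensions. -/
inductive ExtClosure (P : C → Prop) : C → Prop
  | zero (X : C) (hX : IsZero X) : ExtClosure P X
  | of (X : C) (hX : P X) : ExtClosure P X
  | ext {X E Y : C} (f : X ⟶ E) (g : E ⟶ Y) (h : IsShortExactSeq f g)
      (hX : ExtClosure P X) (hY : ExtClosure P Y) : ExtClosure P E

/-- The class of quotient objects of objects of `S`. -/
def QuotClass (S : C → Prop) : C → Prop := fun E => ∃ (E' : C) (p : E' ⟶ E), Epi p ∧ S E'

/-- `[S]`: the extension closure of the class of quotient objects of objects of `S`. -/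
def ExtClosQuot (S : C → Prop) : C → Prop := ExtClosure (QuotClass S)

lemma Perp.of_mono {P : C → Prop} {X Y : C} (i : X ⟶ Y) [Mono i] (hY : Perp P Y) :
    Perp P X := fun V hV f => by
  rw [← cancel_mono i, hY V hV (f ≫ i), zero_comp]

lemma isZero_of_perp {P : C → Prop} {X : C} (hX : P X) (hX' : Perp P X) : IsZero X :=
  (IsZero.iff_id_eq_zero X).mpr (hX' X hX (𝟙 X))

lemma closedUnderExt_perp (P : C → Prop) : ClosedUnderExt (Perp P) := by
  rintro X E Y f g ⟨_, hS⟩ hX hY V hV h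
  obtain ⟨l, hl⟩ := KernelFork.IsLimit.lift' hS.fIsKernel h (hY V hV (h ≫ g))
  rw [← hl, hX V hV l, zero_comp]

lemma closedUnderExt_and {P Q : C → Prop} (hP : ClosedUnderExt P) (hQ : ClosedUnderExt Q) :
    ClosedUnderExt (fun E => P E ∧ Q E) :=
  fun _ _ _ f g h hX hY => ⟨hP f g h hX.1 hY.1, hQ f g h hX.2 hY.2⟩

lemma ExtClosure.mono {P Q : C → Prop} (h : ∀ X, P X → Q X) {X : C}
    (hX : ExtClosure P X) : ExtClosure Q X := by
  induction hX with
  | zero X hX => exact .zero X hX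
  | of X hX => exact .of X (h X hX)
  | ext f g hse _ _ ihX ihY => exact .ext f g hse ihX ihY

lemma ExtClosQuot.mono {P Q : C → Prop} (h : ∀ X, P X → Q X) {X : C}
    (hX : ExtClosQuot P X) : ExtClosQuot Q X :=
  ExtClosure.mono (fun _ ⟨E', p, hp, hS⟩ => ⟨E', p, hp, h E' hS⟩) hX

lemma isShortExactSeq_image_ι_cokernel_π {X Y : C} (f : X ⟶ Y) :
    IsShortExactSeq (Abelian.image.ι f) (cokernel.π f) :=
  ⟨kernel.condition _, .mk' (ShortComplex.exact_of_f_is_kernel _ (kernelIsKernel _))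
    inferInstance inferInstance⟩

lemma closedUnderQuotients_extClosQuot (S : C → Prop) : ClosedUnderQuotients (ExtClosQuot S) := by
  intro X Q p hp hX
  induction hX generalizing Q with
  | zero X hX => exact .zero Q (IsZero.of_epi_eq_zero p (hX.eq_zero_of_src p))
  | of X hX =>
    obtain ⟨X', q, hq, hS⟩ := hX
    exact .of Q ⟨X', q ≫ p, epi_comp q p, hS⟩
  | ext f g hse _ _ ihX ihY =>
    -- `Q` is an extension of `Q / im (f ≫ p)`, a quotient of `Y`, by `im (f ≫ p)`,
    -- a quotient of `X`.
    obtain ⟨_, hS⟩ := hse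
    obtain ⟨u, hu⟩ := CokernelCofork.IsColimit.desc' hS.gIsCokernel (p ≫ cokernel.π (f ≫ p))
      (by rw [← Category.assoc, cokernel.condition])
    have : Epi u := epi_of_epi_fac hu
    exact .ext _ _ (isShortExactSeq_image_ι_cokernel_π (f ≫ p))
      (ihX (Abelian.factorThruImage (f ≫ p)) inferInstance) (ihY u this)

structure IsTorsionClass (P : C → Prop) : Prop where
  of_isZero : ∀ X : C, IsZero X → P X
  of_epi : ClosedUnderQuotients P
  of_ext : ClosedUnderExt P

lemma isTorsionClass_extClosQuot (S : C → Prop) : IsTorsionClass (ExtClosQuot S) :=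
  ⟨fun X h => .zero X h, closedUnderQuotients_extClosQuot S,
    fun _ _ _ f g h hX hY => .ext f g h hX hY⟩

lemma isTorsionClass_true : IsTorsionClass (fun _ : C => True) :=
  ⟨fun _ _ => trivial, fun _ _ _ _ _ => trivial, fun _ _ _ _ _ _ _ _ => trivial⟩

lemma isShortExactSeq_kernel_map_of_epi {X Y Z : C} (f : X ⟶ Y) [Epi f] (g : Y ⟶ Z) :
    IsShortExactSeq (kernel.map f (f ≫ g) (𝟙 _) g (by simp))
      (kernel.map (f ≫ g) g f (𝟙 _) (by simp)) := by
  have hS := kernelCokernelCompSequence_exact f g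
  refine ⟨(hS.sc 0).zero, .mk' (hS.exact 0) inferInstance ?_⟩
  exact (hS.exact 1).epi_f ((isZero_cokernel_of_epi f).eq_of_tgt _ _)

lemma mono_cokernel_map_of_mono {X Y Z : C} (f : X ⟶ Y) (g : Y ⟶ Z) [Mono g] {h : X ⟶ Z}
    (w : f ≫ g = h) : Mono (cokernel.map f h (𝟙 _) g (by simp [w])) := by
  subst w
  exact ((kernelCokernelCompSequence_exact f g).exact 2).mono_g
    ((isZero_kernel_of_mono g).eq_of_src _ _)

namespace IsTorsionClass

variable {P : C → Prop} (hP : IsTorsionClass P)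
include hP

lemma perp_cokernel_of_maximal {E : C} {m : Subobject E} (hm : P m)
    (hmax : ∀ A : Subobject E, P A → ¬ m < A) : Perp P (cokernel m.arrow) := by
  intro V hV h
  set π := cokernel.π m.arrow
  set ρ := cokernel.π h
  have hπ : P (kernel π) := hP.of_epi (Abelian.factorThruImage m.arrow) inferInstance hm
  have hρ : P (kernel ρ) := hP.of_epi (Abelian.factorThruImage h) inferInstance hV
  have hext := isShortExactSeq_kernel_map_of_epi π ρ
  have hker : P (Subobject.mk (kernel.ι (π ≫ ρ))) :=
    hP.of_epi (Subobject.underlyingIso _).inv inferInstance (hP.of_ext _ _ hext hπ hρ)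
  have hle : m ≤ Subobject.mk (kernel.ι (π ≫ ρ)) :=
    Subobject.le_mk_of_comm (kernel.lift _ m.arrow (by simp [π])) (kernel.lift_ι _ _ _)
  have hmk : m = Subobject.mk (kernel.ι (π ≫ ρ)) := hle.eq_or_lt.resolve_right (hmax _ hker)
  have hmkπ : (Subobject.mk (kernel.ι (π ≫ ρ))).arrow ≫ π = 0 := by
    rw [← hmk]
    exact cokernel.condition _
  have hιπ : kernel.ι (π ≫ ρ) ≫ π = 0 := by
    rw [← Subobject.underlyingIso_arrow (kernel.ι (π ≫ ρ)), Category.assoc, hmkπ, comp_zero]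
  have : Epi (kernel.map (π ≫ ρ) ρ π (𝟙 _) (by simp)) := hext.choose_spec.epi_g
  have hmap : kernel.map (π ≫ ρ) ρ π (𝟙 _) (by simp) = 0 := by ext; simpa using hιπ
  have hρ0 : IsZero (kernel ρ) := IsZero.of_epi_eq_zero _ hmap
  rw [← kernel.lift_ι ρ h (cokernel.condition h), hρ0.eq_of_src (kernel.ι ρ) 0, comp_zero]

lemma exists_isGreatest (E : C) [IsNoetherianObject E] :
    ∃ m : Subobject E, IsGreatest {A : Subobject E | P A} m ∧ Perp P (cokernel m.arrow) := by
  obtain ⟨m, hm, hmax⟩ := (wellFounded_gt (α := Subobject E)).has_min {A | P A}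
    ⟨⊥, hP.of_isZero _ (IsZero.of_mono_eq_zero _ Subobject.bot_arrow)⟩
  have hperp := hP.perp_cokernel_of_maximal hm hmax
  refine ⟨m, ⟨hm, fun A hA => ?_⟩, hperp⟩
  obtain ⟨l, hl⟩ := KernelFork.IsLimit.lift'
    (Abelian.monoIsKernelOfCokernel _ (cokernelIsCokernel m.arrow)) A.arrow (hperp _ hA _)
  exact Subobject.le_of_comm l hl

end IsTorsionClass

namespace Subobject

lemma le_of_perp_cokernel_ofLE {P : C → Prop} {E : C} {A B D : Subobject E} (hBD : B ≤ D)
    (hAD : A ≤ D) (hA : P A) (hq : Perp P (cokernel (Subobject.ofLE B D hBD))) : A ≤ B := by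
  obtain ⟨l, hl⟩ := KernelFork.IsLimit.lift'
    (Abelian.monoIsKernelOfCokernel _ (cokernelIsCokernel (Subobject.ofLE B D hBD)))
    _ (hq _ hA (Subobject.ofLE A D hAD ≫ cokernel.π _))
  refine Subobject.le_of_comm l ?_
  rw [← Subobject.ofLE_arrow hBD, ← Category.assoc]
  exact (congrArg (· ≫ D.arrow) hl).trans (Subobject.ofLE_arrow hAD)

lemma mono_cokernel_ofLE {E : C} {A B : Subobject E} (h : A ≤ B) :
    Mono (cokernel.map (Subobject.ofLE A B h) A.arrow (𝟙 _) B.arrow (by simp)) :=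
  mono_cokernel_map_of_mono _ _ (Subobject.ofLE_arrow h)

end Subobject

variable [HasExt.{w} C]

/-- `B_i := {E ∈ 𝒵 : Ext^i(T, E) = 0}`. -/
def BClass (T : C) (i : ℕ) : C → Prop := fun E => Subsingleton (Ext T E i)

/-- `𝒯_i := [B_i ∩ B_{i+1} ∩ ⋯ ∩ B_n]` for `1 ≤ i ≤ n`, and `𝒯_{n+1} := 𝒵`. -/
def TClass (T : C) (n i : ℕ) : C → Prop := fun E =>
  if i ≤ n then ExtClosQuot (fun F => ∀ j : ℕ, i ≤ j → j ≤ n → BClass T j F) E else True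

/-- `ℱ_i := 𝒯_i°` for `1 ≤ i ≤ n+1`, and `ℱ_0 := 𝒵`. -/
def FClass (T : C) (n i : ℕ) : C → Prop := fun E =>
  if i = 0 then True else Perp (TClass T n i) E

/-- A chain of subobjects `0 = E_0 ⊆ E_1 ⊆ ⋯ ⊆ E_n ⊆ E_{n+1} = E` such that, for all
`1 ≤ i ≤ n+1`, `E_i ∈ 𝒯_i` and `E_i/E_{i-1} ∈ 𝒯_i ∩ ℱ_{i-1}`. -/
def IsJMSFiltration (T : C) (n : ℕ) (E : C) (c : Fin (n + 2) → Subobject E) : Prop :=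
  Monotone c ∧ c 0 = ⊥ ∧ c (Fin.last (n + 1)) = ⊤ ∧
    ∀ i : Fin (n + 1),
      TClass T n (i.1 + 1) ((c i.succ : C)) ∧
      ∃ h : c i.castSucc ≤ c i.succ,
        TClass T n (i.1 + 1) (cokernel (Subobject.ofLE (c i.castSucc) (c i.succ) h)) ∧
        FClass T n i.1 (cokernel (Subobject.ofLE (c i.castSucc) (c i.succ) h))

section

variable (T : C) (n : ℕ)

lemma isTorsionClass_tClass (i : ℕ) : IsTorsionClass (TClass T n i) := by
  unfold TClass
  split_ifs
  · exact isTorsionClass_extClosQuot _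
  · exact isTorsionClass_true

variable {T n}

lemma tClass_of_lt {i : ℕ} (hi : n < i) (E : C) : TClass T n i E := by
  simp [TClass, Nat.not_le.mpr hi]

lemma tClass_mono {i j : ℕ} (hij : i ≤ j) {E : C} (hE : TClass T n i E) : TClass T n j E := by
  by_cases hj : j ≤ n
  · rw [TClass, if_pos (hij.trans hj)] at hE
    rw [TClass, if_pos hj]
    exact hE.mono fun X hX k hk hkn => hX k (hij.trans hk) hkn
  · exact tClass_of_lt (Nat.not_le.mp hj) E

lemma perp_of_fClass {i : ℕ} (hi : i ≠ 0) {E : C} (hE : FClass T n i E) :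
    Perp (TClass T n i) E := by
  simpa [FClass, hi] using hE

lemma fClass_of_mono {i : ℕ} {X Y : C} (v : X ⟶ Y) [hv : Mono v] (hY : FClass T n i Y) :
    FClass T n i X := by
  by_cases hi : i = 0
  · simp [FClass, hi]
  · simpa [FClass, hi] using (perp_of_fClass hi hY).of_mono v

lemma closedUnderExt_fClass (i : ℕ) : ClosedUnderExt (FClass T n i) := by
  unfold FClass
  split_ifs
  · exact fun _ _ _ _ _ _ _ _ => trivial
  · exact closedUnderExt_perp _

lemma isZero_of_tClass_of_fClass {i j : ℕ} (hi : 1 ≤ i) (hij : i ≤ j) {E : C}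
    (hT : TClass T n i E) (hF : FClass T n j E) : IsZero E :=
  isZero_of_perp (tClass_mono hij hT) (perp_of_fClass (by omega) hF)

end

section

variable {T : C} {n : ℕ} {E : C} {c : Fin (n + 2) → Subobject E}

lemma IsJMSFiltration.isGreatest (hc : IsJMSFiltration T n E c) (i : Fin (n + 1)) :
    IsGreatest {A : Subobject E | TClass T n (i + 1) A} (c i.succ) := by
  obtain ⟨-, -, hlast, hstep⟩ := hc
  refine ⟨(hstep i).1, fun A hA => ?_⟩
  suffices ∀ j : Fin (n + 2), (i : ℕ) + 1 ≤ j → A ≤ c j from this i.succ (by simp)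
  intro j
  induction j using Fin.reverseInduction with
  | last => exact fun _ => hlast ▸ le_top
  | cast j ih =>
    intro hij
    obtain ⟨hle, -, hF⟩ := (hstep j).2
    simp only [Fin.val_castSucc] at hij
    exact Subobject.le_of_perp_cokernel_ofLE hle (ih (by simp; omega))
      (tClass_mono hij hA) (perp_of_fClass (by omega) hF)

lemma IsJMSFiltration.eq {c' : Fin (n + 2) → Subobject E} (hc : IsJMSFiltration T n E c)
    (hc' : IsJMSFiltration T n E c') : c = c' := by
  funext j
  induction j using Fin.cases with
  | zero => rw [hc.2.1, hc'.2.1]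
  | succ i => exact (hc.isGreatest i).unique (hc'.isGreatest i)

end

lemma exists_isJMSFiltration (T : C) (n : ℕ) (E : C) [IsNoetherianObject E] :
    ∃ c, IsJMSFiltration T n E c := by
  choose t ht hperp using fun k => (isTorsionClass_tClass T n k).exists_isGreatest E
  let s : ℕ → Subobject E := fun k => if k = 0 then ⊥ else t k
  have hs_mono : Monotone s := by
    intro k l hkl
    by_cases hk : k = 0
    · simp [s, hk]
    · simp only [s, hk, if_neg (show l ≠ 0 by omega)]
      exact (ht l).2 (tClass_mono hkl (ht k).1)
  have hs_F (k : ℕ) : FClass T n k (cokernel (s k).arrow) := by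
    by_cases hk : k = 0
    · simp [FClass, hk]
    · rw [show s k = t k from if_neg hk]
      simpa [FClass, hk] using hperp k
  have hs_top : s (n + 1) = ⊤ := top_unique ((ht (n + 1)).2 (tClass_of_lt (by omega) _))
  refine ⟨fun j => s j, fun a b hab => hs_mono hab, by simp [s], hs_top, fun i => ?_⟩
  have hT : TClass T n (i + 1) (s (i + 1)) := (ht (i + 1)).1
  have hle : s i ≤ s (i + 1) := hs_mono (Nat.le_succ i)
  refine ⟨hT, hle, (isTorsionClass_tClass T n _).of_epi (cokernel.π _) inferInstance hT, ?_⟩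
  exact fClass_of_mono (hv := Subobject.mono_cokernel_ofLE hle) _ (hs_F i)

theorem jms_filtration_general_general
    (hNoeth : ∀ X : C, IsNoetherianObject X) (n : ℕ) (T : C) :
    (∀ E : C, ∃! c : Fin (n + 2) → Subobject E, IsJMSFiltration T n E c) ∧
    (∀ i : ℕ, 1 ≤ i → i ≤ n + 1 →
      ClosedUnderExt (fun E => TClass T n i E ∧ FClass T n (i - 1) E)) ∧
    (∀ i j : ℕ, 1 ≤ i → i ≤ n + 1 → 1 ≤ j → j ≤ n + 1 → i ≠ j →
      ∀ E : C, (TClass T n i E ∧ FClass T n (i - 1) E) →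
        (TClass T n j E ∧ FClass T n (j - 1) E) → IsZero E) := by
  refine ⟨fun E => ?_, fun i _ _ => ?_, fun i j hi _ hj _ hij E hEi hEj => ?_⟩
  · obtain ⟨c, hc⟩ := exists_isJMSFiltration T n E
    exact ⟨c, hc, fun c' hc' => hc'.eq hc⟩
  · exact closedUnderExt_and (isTorsionClass_tClass T n i).of_ext (closedUnderExt_fClass _)
  · rcases hij.lt_or_gt with h | h
    · exact isZero_of_tClass_of_fClass hi (by omega) hEi.1 hEj.2
    · exact isZero_of_tClass_of_fClass hj (by omega) hEj.1 hEi.2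

/-- Let `𝒵` be a noetherian abelian category of homological dimension at most
`n` and `T` an object of `𝒵`.  Then every object `E` admits a unique filtration
`0 = E_0 ⊆ E_1 ⊆ ⋯ ⊆ E_n ⊆ E_{n+1} = E` with `E_i ∈ 𝒯_i` and
`E_i/E_{i-1} ∈ 𝒯_i ∩ ℱ_{i-1}` for `1 ≤ i ≤ n+1`; moreover each `𝒯_i ∩ ℱ_{i-1}` is closed
under extensions, and for `i ≠ j` the only object in both `𝒯_i ∩ ℱ_{i-1}` and
`𝒯_j ∩ ℱ_{j-1}` is the zero object. -/
theorem jms_filtration_general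
    (hNoeth : ∀ X : C, IsNoetherianObject X) (n : ℕ)
    (hdim : ∀ (X Y : C) (i : ℕ), n < i → Subsingleton (Ext X Y i)) (T : C) :
    (∀ E : C, ∃! c : Fin (n + 2) → Subobject E, IsJMSFiltration T n E c) ∧
    (∀ i : ℕ, 1 ≤ i → i ≤ n + 1 →
      ClosedUnderExt (fun E => TClass T n i E ∧ FClass T n (i - 1) E)) ∧
    (∀ i j : ℕ, 1 ≤ i → i ≤ n + 1 → 1 ≤ j → j ≤ n + 1 → i ≠ j →
      ∀ E : C, (TClass T n i E ∧ FClass T n (i - 1) E) →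
        (TClass T n j E ∧ FClass T n (j - 1) E) → IsZero E) :=
  jms_filtration_general_general hNoeth n T

end TorsionPairs
end

section
/- Let 𝒟 be a triangulated category and let A and B be hearts of bounded t-structures on 𝒟. Suppose that every object X of B fits into a distinguished triangle Y → X → Z → Y[1] with Y ∈ A[1] and Z ∈ A. Then 𝒯 := A ∩ B and ℱ := A ∩ B[-1] form a torsion pair in the abelian category A, and B is the tilt of A with respect to (𝒯, ℱ): an object X of 𝒟 lies in B if and only if it fits into a distinguished triangle F[1] → X → T → F[2] with T ∈ 𝒯 and F ∈ ℱ. -/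
/-!
The hypothesis puts the heart `B` of `t₂` inside `D₁^{[-1, 0]}`. As `t₂` is bounded, every object
of `D₂^{[a, b]}` is an iterated extension of objects of `B[-a], …, B[-b]`, whence
`D₂^{≤ n} ⊆ D₁^{≤ n}` and `D₂^{≥ n + 1} ⊆ D₁^{≥ n}`; taking orthogonals gives
`D₁^{≤ n} ⊆ D₂^{≤ n + 1}` and `D₁^{≥ n} ⊆ D₂^{≥ n}`. With these four inclusions, the
`t₂`-truncation triangle `τ₂^{≤ 0} E → E → τ₂^{≥ 1} E` of `E ∈ A` is the torsion triangle,
and for `X ∈ B` the given triangle `Y → X → Z` exhibits `X` as an object of the tilt.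
-/

open CategoryTheory Limits CategoryTheory.Pretriangulated CategoryTheory.Triangulated

namespace TorsionPairs

variable {D : Type*} [Category D] [Preadditive D] [HasZeroObject D] [HasShift D ℤ]
  [∀ n : ℤ, (shiftFunctor D n).Additive] [Pretriangulated D] [IsTriangulated D]

/-- The heart of a t-structure: the objects that are both `≤ 0` and `≥ 0`. -/
def heart (t : TStructure D) : D → Prop := fun X => t.le 0 X ∧ t.ge 0 X

/-- A t-structure is bounded if every object lies in `D^{≥ a} ∩ D^{≤ b}` for some
`a, b : ℤ`. -/
def IsBoundedTStructure (t : TStructure D) : Prop :=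
  ∀ X : D, ∃ a b : ℤ, t.ge a X ∧ t.le b X

end TorsionPairs

namespace CategoryTheory.Pretriangulated

variable {C : Type*} [Category C] [Preadditive C] [HasZeroObject C] [HasShift C ℤ]
  [∀ n : ℤ, (shiftFunctor C n).Additive] [Pretriangulated C]

lemma distinguished_mk_of_iso₁ {X₁ X₁' X₂ X₃ : C} (e : X₁' ≅ X₁) {f : X₁ ⟶ X₂} {g : X₂ ⟶ X₃}
    {h : X₃ ⟶ X₁⟦(1 : ℤ)⟧} (hT : Triangle.mk f g h ∈ distTriang C) :
    Triangle.mk (e.hom ≫ f) g (h ≫ e.inv⟦(1 : ℤ)⟧') ∈ distTriang C := by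
  have comm₃ : (h ≫ e.inv⟦(1 : ℤ)⟧') ≫ e.hom⟦(1 : ℤ)⟧' = 𝟙 X₃ ≫ h := by
    simp [← Functor.map_comp]
  exact isomorphic_distinguished _ hT _ <| Triangle.isoMk _ _ e (Iso.refl X₂) (Iso.refl X₃)
    (Category.comp_id _) ((Category.comp_id g).trans (Category.id_comp g).symm) comm₃

end CategoryTheory.Pretriangulated

namespace CategoryTheory.Triangulated.TStructure

variable {C : Type*} [Category C] [Preadditive C] [HasZeroObject C] [HasShift C ℤ]
  [∀ n : ℤ, (shiftFunctor C n).Additive] [Pretriangulated C]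

section

variable (t : TStructure C)

lemma isLE₃ (T : Triangle C) (hT : T ∈ distTriang C) (n : ℤ) (h₂ : t.IsLE T.obj₂ n)
    (h₁ : t.IsLE T.obj₁ (n + 1)) : t.IsLE T.obj₃ n :=
  t.isLE₂ _ (rot_of_distTriang _ hT) n h₂ (t.isLE_shift _ (n + 1) 1 n)

lemma isGE₁ (T : Triangle C) (hT : T ∈ distTriang C) (n : ℤ) (h₂ : t.IsGE T.obj₂ n)
    (h₃ : t.IsGE T.obj₃ (n - 1)) : t.IsGE T.obj₁ n :=
  t.isGE₂ _ (inv_rot_of_distTriang _ hT) n (t.isGE_shift _ (n - 1) (-1) n) h₂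

end

variable {t₁ t₂ : TStructure C}

lemma isLE_add_one_of_isGE_imp (h : ∀ X n, t₂.IsGE X (n + 1) → t₁.IsGE X n) (X : C) (n : ℤ)
    (hX : t₁.IsLE X n) : t₂.IsLE X (n + 1) :=
  (t₂.isLE_iff_orthogonal (n + 1) (n + 1 + 1) rfl X).2 fun Y f hY =>
    t₁.zero_of_isLE_of_isGE f n (n + 1) (by lia) hX (h Y (n + 1) hY)

lemma isGE_of_isLE_imp (h : ∀ X n, t₂.IsLE X n → t₁.IsLE X n) (X : C) (n : ℤ)
    (hX : t₁.IsGE X n) : t₂.IsGE X n :=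
  (t₂.isGE_iff_orthogonal (n - 1) n (by lia) X).2 fun Y f hY =>
    t₁.zero_of_isLE_of_isGE f (n - 1) n (by lia) (h Y _ hY) hX

lemma isGE_isLE_of_isGE_isLE_self
    (hB : ∀ X, t₂.IsLE X 0 → t₂.IsGE X 0 → t₁.IsGE X (-1) ∧ t₁.IsLE X 0)
    (X : C) (a : ℤ) (hge : t₂.IsGE X a) (hle : t₂.IsLE X a) :
    t₁.IsGE X (a - 1) ∧ t₁.IsLE X a := by
  obtain ⟨h₁, h₂⟩ := hB (X⟦a⟧) (t₂.isLE_shift X a a 0) (t₂.isGE_shift X a a 0)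
  exact ⟨(t₁.isGE_shift_iff X (a - 1) a (-1)).1 h₁, (t₁.isLE_shift_iff X a a 0).1 h₂⟩

lemma isGE_isLE_of_isGE_isLE
    (hB : ∀ X, t₂.IsLE X 0 → t₂.IsGE X 0 → t₁.IsGE X (-1) ∧ t₁.IsLE X 0)
    (a b : ℤ) (hab : a ≤ b) (X : C) (hge : t₂.IsGE X a) (hle : t₂.IsLE X b) :
    t₁.IsGE X (a - 1) ∧ t₁.IsLE X b := by
  induction b, hab using Int.leInduction generalizing X with
  | base => exact isGE_isLE_of_isGE_isLE_self hB X a hge hle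
  | succ b hab ih =>
    obtain ⟨X', X'', hX', hX'', f, g, h, hT⟩ := t₂.exists_triangle X b (b + 1) rfl
    have hX'le : t₂.IsLE X' b := ⟨hX'⟩
    have hX''ge : t₂.IsGE X'' (b + 1) := ⟨hX''⟩
    have hX'ge : t₂.IsGE X' a := t₂.isGE₁ _ hT a hge (t₂.isGE_of_ge X'' _ (b + 1))
    have hX''le : t₂.IsLE X'' (b + 1) := t₂.isLE₃ _ hT (b + 1) hle (t₂.isLE_of_le X' b _)
    obtain ⟨h₁, h₂⟩ := ih X' hX'ge hX'le
    obtain ⟨h₃, h₄⟩ := isGE_isLE_of_isGE_isLE_self hB X'' (b + 1) hX''ge hX''le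
    exact ⟨t₁.isGE₂ _ hT _ h₁ (t₁.isGE_of_ge X'' _ (b + 1 - 1)),
      t₁.isLE₂ _ hT _ (t₁.isLE_of_le X' b _) h₄⟩

end CategoryTheory.Triangulated.TStructure

namespace TorsionPairs

section

variable {D : Type*} [Category D] [Preadditive D] [HasZeroObject D] [HasShift D ℤ]
  [∀ n : ℤ, (shiftFunctor D n).Additive] [Pretriangulated D]

lemma heart_iff (t : TStructure D) (X : D) : heart t X ↔ t.IsLE X 0 ∧ t.IsGE X 0 :=
  ⟨fun h => ⟨⟨h.1⟩, ⟨h.2⟩⟩, fun h => ⟨h.1.1, h.2.1⟩⟩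

lemma heart₂ {t : TStructure D} (T : Triangle D) (hT : T ∈ distTriang D) (h₁ : heart t T.obj₁)
    (h₃ : heart t T.obj₃) : heart t T.obj₂ :=
  ⟨(t.isLE₂ T hT 0 ⟨h₁.1⟩ ⟨h₃.1⟩).1, (t.isGE₂ T hT 0 ⟨h₁.2⟩ ⟨h₃.2⟩).1⟩

lemma isGE_isLE_of_distTriang_of_heart {t : TStructure D} {X Y Z : D} {f : Y ⟶ X} {g : X ⟶ Z}
    {h : Z ⟶ Y⟦(1 : ℤ)⟧} (hT : Triangle.mk f g h ∈ distTriang D) (hY : heart t (Y⟦(-1 : ℤ)⟧))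
    (hZ : heart t Z) : t.IsGE X (-1) ∧ t.IsLE X 0 := by
  rw [heart_iff, t.isLE_shift_iff Y (-1) (-1) 0, t.isGE_shift_iff Y (-1) (-1) 0] at hY
  obtain ⟨hY₁, hY₂⟩ := hY
  obtain ⟨hZ₁, hZ₂⟩ := (heart_iff t Z).1 hZ
  exact ⟨t.isGE₂ _ hT _ hY₂ (t.isGE_of_ge Z (-1) 0), t.isLE₂ _ hT _ (t.isLE_of_le Y (-1) 0) hZ₁⟩

variable {t₁ t₂ : TStructure D}

lemma isLE_of_isLE_of_isBounded
    (hB : ∀ X, t₂.IsLE X 0 → t₂.IsGE X 0 → t₁.IsGE X (-1) ∧ t₁.IsLE X 0)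
    (hb : IsBoundedTStructure t₂) (X : D) (n : ℤ) (hX : t₂.IsLE X n) : t₁.IsLE X n := by
  obtain ⟨a, -, ha, -⟩ := hb X
  have : t₂.IsGE X a := ⟨ha⟩
  exact (TStructure.isGE_isLE_of_isGE_isLE hB (min a n) n (min_le_right a n) X
    (t₂.isGE_of_ge X _ a (min_le_left a n)) hX).2

lemma isGE_of_isGE_of_isBounded
    (hB : ∀ X, t₂.IsLE X 0 → t₂.IsGE X 0 → t₁.IsGE X (-1) ∧ t₁.IsLE X 0)
    (hb : IsBoundedTStructure t₂) (X : D) (n : ℤ) (hX : t₂.IsGE X (n + 1)) : t₁.IsGE X n := by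
  obtain ⟨-, b, -, hb⟩ := hb X
  have : t₂.IsLE X b := ⟨hb⟩
  simpa using (TStructure.isGE_isLE_of_isGE_isLE hB (n + 1) (max (n + 1) b) (le_max_left _ _) X
    hX (t₂.isLE_of_le X b _ (le_max_right _ _))).1

lemma exists_torsion_torsionFree_triangle (hle : ∀ X n, t₂.IsLE X n → t₁.IsLE X n)
    (hge : ∀ X n, t₂.IsGE X (n + 1) → t₁.IsGE X n) (E : D) (hE : heart t₁ E) :
    ∃ (T F : D) (f : T ⟶ E) (g : E ⟶ F) (h : F ⟶ T⟦(1 : ℤ)⟧),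
      Triangle.mk f g h ∈ distTriang D ∧
      (heart t₁ T ∧ heart t₂ T) ∧ (heart t₁ F ∧ heart t₂ (F⟦(1 : ℤ)⟧)) := by
  obtain ⟨hE₁, hE₂⟩ := (heart_iff t₁ E).1 hE
  have hE₂le : t₂.IsLE E 1 := TStructure.isLE_add_one_of_isGE_imp hge E 0 hE₁
  have hE₂ge : t₂.IsGE E 0 := TStructure.isGE_of_isLE_imp hle E 0 hE₂
  obtain ⟨T, F, hT, hF, f, g, h, hTri⟩ := t₂.exists_triangle E 0 1 rfl
  have hT₂le : t₂.IsLE T 0 := ⟨hT⟩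
  have hF₂ge : t₂.IsGE F 1 := ⟨hF⟩
  have hT₂ge : t₂.IsGE T 0 := t₂.isGE₁ _ hTri 0 hE₂ge (t₂.isGE_of_ge F _ 1)
  have hF₂le : t₂.IsLE F 1 := t₂.isLE₃ _ hTri 1 hE₂le (t₂.isLE_of_le T 0 _)
  have hT₁le : t₁.IsLE T 0 := hle T 0 hT₂le
  have hF₁ge : t₁.IsGE F 0 := hge F 0 hF₂ge
  have hT₁ge : t₁.IsGE T 0 := t₁.isGE₁ _ hTri 0 hE₂ (t₁.isGE_of_ge F _ 0)
  have hF₁le : t₁.IsLE F 0 := t₁.isLE₃ _ hTri 0 hE₁ (t₁.isLE_of_le T 0 _)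
  exact ⟨T, F, f, g, h, hTri,
    ⟨(heart_iff _ _).2 ⟨hT₁le, hT₁ge⟩, (heart_iff _ _).2 ⟨hT₂le, hT₂ge⟩⟩,
    (heart_iff _ _).2 ⟨hF₁le, hF₁ge⟩,
    (heart_iff _ _).2 ⟨t₂.isLE_shift F 1 1 0, t₂.isGE_shift F 1 1 0⟩⟩

lemma exists_tilt_triangle_of_distTriang (hle : ∀ X n, t₂.IsLE X n → t₁.IsLE X n)
    (hge : ∀ X n, t₂.IsGE X (n + 1) → t₁.IsGE X n) {X Y Z : D} (hX : heart t₂ X) {f : Y ⟶ X}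
    {g : X ⟶ Z} {h : Z ⟶ Y⟦(1 : ℤ)⟧} (hTri : Triangle.mk f g h ∈ distTriang D)
    (hY : heart t₁ (Y⟦(-1 : ℤ)⟧)) (hZ : heart t₁ Z) :
    ∃ (T F : D) (f : F⟦(1 : ℤ)⟧ ⟶ X) (g : X ⟶ T) (h : T ⟶ (F⟦(1 : ℤ)⟧)⟦(1 : ℤ)⟧),
      Triangle.mk f g h ∈ distTriang D ∧
      (heart t₁ T ∧ heart t₂ T) ∧ (heart t₁ F ∧ heart t₂ (F⟦(1 : ℤ)⟧)) := by
  obtain ⟨hX₁, hX₂⟩ := (heart_iff t₂ X).1 hX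
  have hY₂le : t₂.IsLE Y 0 := (t₂.isLE_shift_iff Y 0 (-1) 1).1
    (TStructure.isLE_add_one_of_isGE_imp hge _ 0 ((heart_iff _ _).1 hY).1)
  have hZ₂le : t₂.IsLE Z 0 := t₂.isLE₃ _ hTri 0 hX₁ (t₂.isLE_of_le Y 0 _)
  have hZ₂ge : t₂.IsGE Z 0 := TStructure.isGE_of_isLE_imp hle Z 0 ((heart_iff _ _).1 hZ).2
  have hY₂ge : t₂.IsGE Y 0 := t₂.isGE₁ _ hTri 0 hX₂ (t₂.isGE_of_ge Z _ 0)
  let e : (Y⟦(-1 : ℤ)⟧)⟦(1 : ℤ)⟧ ≅ Y := (shiftFunctorCompIsoId D (-1 : ℤ) 1 (by lia)).app Y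
  exact ⟨Z, Y⟦(-1 : ℤ)⟧, _, _, _, distinguished_mk_of_iso₁ e hTri,
    ⟨hZ, (heart_iff _ _).2 ⟨hZ₂le, hZ₂ge⟩⟩, hY,
    (heart_iff _ _).2 ⟨t₂.isLE_of_iso e.symm 0, t₂.isGE_of_iso e.symm 0⟩⟩

end

variable {D : Type*} [Category D] [Preadditive D] [HasZeroObject D] [HasShift D ℤ]
  [∀ n : ℤ, (shiftFunctor D n).Additive] [Pretriangulated D] [IsTriangulated D]

theorem tilt_of_heart_of_bounded_tstructure_general
    (t₁ t₂ : TStructure D)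
    (hb₂ : IsBoundedTStructure t₂)
    (hAB : ∀ X : D, heart t₂ X →
      ∃ (Y Z : D) (f : Y ⟶ X) (g : X ⟶ Z) (h : Z ⟶ Y⟦(1 : ℤ)⟧),
        Triangle.mk f g h ∈ (distTriang D) ∧ heart t₁ (Y⟦(-1 : ℤ)⟧) ∧ heart t₁ Z) :
    -- `Hom(𝒯, ℱ) = 0`:
    (∀ T F : D, (heart t₁ T ∧ heart t₂ T) → (heart t₁ F ∧ heart t₂ (F⟦(1 : ℤ)⟧)) →
      ∀ f : T ⟶ F, f = 0) ∧
    -- every object `E` of `A` sits in a short exact sequence `0 → T → E → F → 0` in `A`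
    -- with `T ∈ 𝒯` and `F ∈ ℱ`:
    (∀ E : D, heart t₁ E →
      ∃ (T F : D) (f : T ⟶ E) (g : E ⟶ F) (h : F ⟶ T⟦(1 : ℤ)⟧),
        Triangle.mk f g h ∈ (distTriang D) ∧
        (heart t₁ T ∧ heart t₂ T) ∧ (heart t₁ F ∧ heart t₂ (F⟦(1 : ℤ)⟧))) ∧
    -- `B` is the corresponding tilt of `A`:
    (∀ X : D, heart t₂ X ↔
      ∃ (T F : D) (f : F⟦(1 : ℤ)⟧ ⟶ X) (g : X ⟶ T) (h : T ⟶ (F⟦(1 : ℤ)⟧)⟦(1 : ℤ)⟧),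
        Triangle.mk f g h ∈ (distTriang D) ∧
        (heart t₁ T ∧ heart t₂ T) ∧ (heart t₁ F ∧ heart t₂ (F⟦(1 : ℤ)⟧))) := by
  have hB : ∀ X, t₂.IsLE X 0 → t₂.IsGE X 0 → t₁.IsGE X (-1) ∧ t₁.IsLE X 0 := by
    intro X hle hge
    obtain ⟨Y, Z, f, g, h, hTri, hY, hZ⟩ := hAB X ((heart_iff t₂ X).2 ⟨hle, hge⟩)
    exact isGE_isLE_of_distTriang_of_heart hTri hY hZ
  have hle := isLE_of_isLE_of_isBounded hB hb₂
  have hge := isGE_of_isGE_of_isBounded hB hb₂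
  refine ⟨fun T F hT hF f => ?_, exists_torsion_torsionFree_triangle hle hge,
    fun X => ⟨fun hX => ?_, ?_⟩⟩
  · exact t₂.zero_of_isLE_of_isGE f 0 1 (by lia) ⟨hT.2.1⟩
      ((t₂.isGE_shift_iff F 1 1 0).1 ⟨hF.2.2⟩)
  · obtain ⟨Y, Z, f, g, h, hTri, hY, hZ⟩ := hAB X hX
    exact exists_tilt_triangle_of_distTriang hle hge hX hTri hY hZ
  · rintro ⟨T, F, f, g, h, hTri, ⟨-, hT⟩, -, hF⟩
    exact heart₂ _ hTri hF hT

/-- Bayer-Macrì-Toda: let `A`, `B` be hearts of bounded t-structures on a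
triangulated category `𝒟` such that every `X ∈ B` fits into a distinguished triangle
`Y → X → Z → Y[1]` with `Y ∈ A[1]` and `Z ∈ A`.  Then `𝒯 := A ∩ B` and `ℱ := A ∩ B[-1]`
form a torsion pair in the abelian category `A` (short exact sequences in `A` being the
distinguished triangles of `𝒟` with all three vertices in `A`), and `B` is the tilt of `A`
at `(𝒯, ℱ)`: an object `X` lies in `B` iff it fits into a distinguished triangle
`F[1] → X → T → F[2]` with `T ∈ 𝒯` and `F ∈ ℱ`. -/
theorem tilt_of_heart_of_bounded_tstructure
    (t₁ t₂ : TStructure D)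
    (hb₁ : IsBoundedTStructure t₁) (hb₂ : IsBoundedTStructure t₂)
    (hAB : ∀ X : D, heart t₂ X →
      ∃ (Y Z : D) (f : Y ⟶ X) (g : X ⟶ Z) (h : Z ⟶ Y⟦(1 : ℤ)⟧),
        Triangle.mk f g h ∈ (distTriang D) ∧ heart t₁ (Y⟦(-1 : ℤ)⟧) ∧ heart t₁ Z) :
    -- `Hom(𝒯, ℱ) = 0`:
    (∀ T F : D, (heart t₁ T ∧ heart t₂ T) → (heart t₁ F ∧ heart t₂ (F⟦(1 : ℤ)⟧)) →
      ∀ f : T ⟶ F, f = 0) ∧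
    -- every object `E` of `A` sits in a short exact sequence `0 → T → E → F → 0` in `A`
    -- with `T ∈ 𝒯` and `F ∈ ℱ`:
    (∀ E : D, heart t₁ E →
      ∃ (T F : D) (f : T ⟶ E) (g : E ⟶ F) (h : F ⟶ T⟦(1 : ℤ)⟧),
        Triangle.mk f g h ∈ (distTriang D) ∧
        (heart t₁ T ∧ heart t₂ T) ∧ (heart t₁ F ∧ heart t₂ (F⟦(1 : ℤ)⟧))) ∧
    -- `B` is the corresponding tilt of `A`:
    (∀ X : D, heart t₂ X ↔
      ∃ (T F : D) (f : F⟦(1 : ℤ)⟧ ⟶ X) (g : X ⟶ T) (h : T ⟶ (F⟦(1 : ℤ)⟧)⟦(1 : ℤ)⟧),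
        Triangle.mk f g h ∈ (distTriang D) ∧
        (heart t₁ T ∧ heart t₂ T) ∧ (heart t₁ F ∧ heart t₂ (F⟦(1 : ℤ)⟧))) :=
  tilt_of_heart_of_bounded_tstructure_general t₁ t₂ hb₂ hAB

end TorsionPairs
end

section
/- Let 𝒵 be a noetherian abelian category of homological dimension at most 2 and let T be an object of 𝒵 with Ext^2(T,T) = 0. Set B_0 := {E ∈ 𝒵 : Hom(T,E) = 0}, B_2 := {E ∈ 𝒵 : Ext^2(T,E) = 0}, and X_1 := {E ∈ 𝒵 : Hom(T,E) = 0 and Ext^2(T,E) = 0}. Then B_2° = B_0 ∩ X_1°, and (B_2, B_0 ∩ X_1°) is a torsion pair in 𝒵. -/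
/-!
The long exact sequence of `Ext(T, -)` shows that `B₂ = {E : Ext²(T, E) = 0}` is closed under
extensions and, since `Ext³` vanishes, under quotients. Closure under
quotients lets one test `B₂°` on subobjects: a map `V ⟶ E` with `V ∈ B₂` factors through its image,
a subobject of `E` lying in `B₂`, and lying in `X₁` as soon as `Hom(T, E) = 0`; as `T ∈ B₂`, this
gives `B₂° = B₀ ∩ X₁°`. By the ascending chain condition `E` has a maximal subobject `X` in `B₂`,
and `E / X ∈ B₂°`: the preimage in `E` of the image of a map `V ⟶ E / X` with `V ∈ B₂` is an
extension of that image by `X`, hence lies in `B₂`, hence equals `X`, so the image is zero.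
-/

open CategoryTheory Limits Abelian

namespace TorsionPairs

universe w w' v u v' u'

variable {C : Type u} [Category.{v} C] [Abelian C]

open ZeroObject

section TorsionPair

variable {P : C → Prop}

lemma perp_iff_of_closedUnderQuotients (hq : ClosedUnderQuotients P) {T : C} (hT : P T)
    (E : C) :
    Perp P E ↔ (∀ f : T ⟶ E, f = 0) ∧ Perp (fun F => (∀ f : T ⟶ F, f = 0) ∧ P F) E := by
  refine ⟨fun h => ⟨h T hT, fun V hV => h V hV.2⟩, ?_⟩
  rintro ⟨hTE, hperp⟩ V hV f
  have hTI : ∀ g : T ⟶ Limits.image f, g = 0 := fun g => by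
    rw [← cancel_mono (Limits.image.ι f), hTE (g ≫ _), zero_comp]
  have hI : P (Limits.image f) := hq (Limits.factorThruImage f) inferInstance hV
  rw [← Limits.image.fac f, hperp _ ⟨hTI, hI⟩ (Limits.image.ι f), comp_zero]

lemma isShortExactSeq_pullback_cokernel {X E I : C} (i : X ⟶ E) [Mono i]
    (ι : I ⟶ cokernel i) [Mono ι] :
    IsShortExactSeq (pullback.lift i 0 (by simp) : X ⟶ pullback (cokernel.π i) ι)
      (pullback.snd (cokernel.π i) ι) := by
  set j : X ⟶ pullback (cokernel.π i) ι := pullback.lift i 0 (by simp)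
  have hjf : j ≫ pullback.fst _ _ = i := pullback.lift_fst _ _ _
  have hjs : j ≫ pullback.snd _ _ = 0 := pullback.lift_snd _ _ _
  have : Mono j := by
    have : Mono (j ≫ pullback.fst (cokernel.π i) ι) := by rw [hjf]; infer_instance
    exact mono_of_mono j (pullback.fst _ _)
  refine ⟨hjs, .mk' (ShortComplex.exact_of_f_is_kernel _ ?_) inferInstance
    (epi_pullback_of_epi_f _ _)⟩
  refine KernelFork.IsLimit.ofι _ _
    (fun k hk => monoLift i (k ≫ pullback.fst _ _)
      (by rw [Category.assoc, pullback.condition, ← Category.assoc, hk, zero_comp]))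
    (fun k hk => pullback.hom_ext ?_ ?_) (fun k _ m hm => ?_)
  · rw [Category.assoc, hjf, monoLift_comp]
  · rw [Category.assoc, hjs, comp_zero, hk]
  · rw [← cancel_mono i, monoLift_comp, ← hm, Category.assoc, hjf]

lemma isZero_of_mk_pullback_fst_le {E I : C} {X : Subobject E} (ι : I ⟶ cokernel X.arrow)
    [Mono ι] (h : Subobject.mk (pullback.fst (cokernel.π X.arrow) ι) ≤ X) : IsZero I := by
  set j : (X : C) ⟶ pullback (cokernel.π X.arrow) ι := pullback.lift X.arrow 0 (by simp)
  set k := Subobject.ofMkLE _ X h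
  have hkj : k ≫ j = 𝟙 _ := by
    rw [← cancel_mono (pullback.fst (cokernel.π X.arrow) ι), Category.assoc, pullback.lift_fst,
      Subobject.ofMkLE_arrow, Category.id_comp]
  have hsnd : pullback.snd (cokernel.π X.arrow) ι = 0 := by
    rw [← Category.id_comp (pullback.snd _ _), ← hkj, Category.assoc, pullback.lift_snd,
      comp_zero]
  have : Epi (pullback.snd (cokernel.π X.arrow) ι) := epi_pullback_of_epi_f _ _
  exact IsZero.of_epi_eq_zero _ hsnd

lemma perp_cokernel_of_maximal (hq : ClosedUnderQuotients P) (hext : ClosedUnderExt P)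
    {E : C} {X : Subobject E} (hX : P X) (hmax : ∀ Y : Subobject E, P Y → ¬ X < Y) :
    Perp P (cokernel X.arrow) := by
  intro V hV f
  suffices IsZero (Limits.image f) by
    rw [← Limits.image.fac f, this.eq_of_src (Limits.image.ι f) 0, comp_zero]
  have hpb : P (pullback (cokernel.π X.arrow) (Limits.image.ι f)) :=
    hext _ _ (isShortExactSeq_pullback_cokernel X.arrow (Limits.image.ι f)) hX
      (hq (Limits.factorThruImage f) inferInstance hV)
  set Y := Subobject.mk (pullback.fst (cokernel.π X.arrow) (Limits.image.ι f))
  have hXY : X ≤ Y :=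
    Subobject.le_mk_of_comm (pullback.lift X.arrow 0 (by simp)) (pullback.lift_fst _ _ _)
  have hY : P Y := hq (Subobject.underlyingIso _).inv inferInstance hpb
  exact isZero_of_mk_pullback_fst_le (Limits.image.ι f)
    (hXY.lt_or_eq.resolve_left (hmax Y hY)).ge

lemma exists_isShortExactSeq_perp (hq : ClosedUnderQuotients P) (hext : ClosedUnderExt P)
    (h0 : P 0) (E : C) [IsNoetherianObject E] :
    ∃ (X Y : C) (f : X ⟶ E) (g : E ⟶ Y), P X ∧ Perp P Y ∧ IsShortExactSeq f g := by
  have hbot : P ((⊥ : Subobject E) : C) := hq Subobject.botCoeIsoZero.inv inferInstance h0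
  obtain ⟨X, hX, hmax⟩ := wellFounded_gt.has_min {Y : Subobject E | P Y} ⟨⊥, hbot⟩
  exact ⟨X, _, X.arrow, cokernel.π X.arrow, hX, perp_cokernel_of_maximal hq hext hX hmax,
    cokernel.condition _, .mk' (ShortComplex.exact_cokernel _) inferInstance inferInstance⟩

lemma isTorsionPair_perp (hNoeth : ∀ X : C, IsNoetherianObject X) (hq : ClosedUnderQuotients P)
    (hext : ClosedUnderExt P) (h0 : P 0) : IsTorsionPair P (Perp P) :=
  ⟨fun X _ hX hY => hY X hX, fun E => exists_isShortExactSeq_perp hq hext h0 E⟩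

end TorsionPair

variable [HasExt.{w} C]

section Ext

variable {T : C} {n : ℕ}

lemma closedUnderExt_subsingleton_ext : ClosedUnderExt (fun E => Subsingleton (Ext T E n)) := by
  rintro _ _ _ _ _ ⟨_, hS⟩ hX hY
  refine subsingleton_of_forall_eq 0 fun x => ?_
  obtain ⟨x₁, rfl⟩ := Ext.covariant_sequence_exact₂ T hS x (Subsingleton.elim _ _)
  rw [Subsingleton.elim x₁ 0, Ext.zero_comp]

lemma closedUnderQuotients_subsingleton_ext (h : ∀ K : C, Subsingleton (Ext T K (n + 1))) :
    ClosedUnderQuotients (fun E => Subsingleton (Ext T E n)) := by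
  intro E Q p _ hE
  have hS : (ShortComplex.mk (kernel.ι p) p (kernel.condition p)).ShortExact :=
    .mk' (ShortComplex.exact_kernel p) inferInstance inferInstance
  refine subsingleton_of_forall_eq 0 fun x => ?_
  obtain ⟨x₂, rfl⟩ := Ext.covariant_sequence_exact₃ T hS x rfl (Subsingleton.elim _ _)
  rw [Subsingleton.elim x₂ 0, Ext.zero_comp]

end Ext

/-- Let `𝒵` be a noetherian abelian category of homological dimension at most
2 and let `T` be an object with `Ext²(T,T) = 0`.  Set `B₀ = {E : Hom(T,E) = 0}`,
`B₂ = {E : Ext²(T,E) = 0}` and `X₁ = B₀ ∩ B₂`.  Then `B₂° = B₀ ∩ X₁°` and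
`(B₂, B₀ ∩ X₁°)` is a torsion pair in `𝒵`. -/
theorem perp_B2_eq_and_isTorsionPair
    (hNoeth : ∀ X : C, IsNoetherianObject X)
    (hdim : ∀ (X Y : C) (i : ℕ), 2 < i → Subsingleton (Ext X Y i))
    (T : C) (hT : Subsingleton (Ext T T 2)) :
    (∀ E : C, Perp (fun F => Subsingleton (Ext T F 2)) E ↔
      ((∀ f : T ⟶ E, f = 0) ∧
        Perp (fun F => (∀ f : T ⟶ F, f = 0) ∧ Subsingleton (Ext T F 2)) E)) ∧
    IsTorsionPair (fun E => Subsingleton (Ext T E 2))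
      (fun E => (∀ f : T ⟶ E, f = 0) ∧
        Perp (fun F => (∀ f : T ⟶ F, f = 0) ∧ Subsingleton (Ext T F 2)) E) := by
  have hq : ClosedUnderQuotients (fun E => Subsingleton (Ext T E 2)) :=
    closedUnderQuotients_subsingleton_ext fun K => hdim T K 3 (by norm_num)
  have hperp := perp_iff_of_closedUnderQuotients hq hT
  have h0 : Subsingleton (Ext T 0 2) := hq 0 ((isZero_zero C).epi _) hT
  refine ⟨hperp, ?_⟩
  rw [← funext fun E => propext (hperp E)]
  exact isTorsionPair_perp hNoeth hq closedUnderExt_subsingleton_ext h0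

end TorsionPairs
end

section
/- For every object M ∈ 𝒜, one has Ψ^0(M) ∈ X_0 and Ψ^{-2}(M) ∈ X_2. -/
/-!
Let `N = Ψ(M)`, so that `N` has cohomology in `[-2, 0]` and `Φ(N) ≅ M[0]`. Since `Φ` sends an
object concentrated in degree `n` to one with cohomology in `[n, n + 2]`, extension-closedness of
the aisles along truncation triangles shows that it sends objects with cohomology in `[a, b]` to
objects with cohomology in `[a, b + 2]`.

Apply `Φ` to `τ≤-1 N → N → τ≥0 N`, where `τ≥0 N ≅ Ψ⁰(M)[0]`: both `Φ(N)` and `Φ(τ≤-1 N)[1]` are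
`≤ 0`, hence so is `Φ(Ψ⁰(M)[0])`, i.e. `Ψ⁰(M) ∈ X₀`. Dually, in `τ≤-2 N → N → τ≥-1 N` one has
`τ≤-2 N ≅ Ψ⁻²(M)[2]`, and both `Φ(τ≥-1 N)[-1]` and `Φ(N)` are `≥ 0`, hence so is
`Φ(Ψ⁻²(M)[0])[2]`, i.e. `Ψ⁻²(M) ∈ X₂`.
-/

namespace CategoryTheory.Triangulated.TStructure

open Limits Pretriangulated

variable {C D : Type*} [Category C] [Category D] [Preadditive C] [Preadditive D]
  [HasZeroObject C] [HasZeroObject D] [HasShift C ℤ] [HasShift D ℤ]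
  [∀ n : ℤ, (shiftFunctor C n).Additive] [∀ n : ℤ, (shiftFunctor D n).Additive]
  [Pretriangulated C] [Pretriangulated D] [IsTriangulated C]
  {t₁ : TStructure C} {t₂ : TStructure D} {F : C ⥤ D} [F.CommShift ℤ] [F.IsTriangulated]

lemma isGE_and_isLE_map_obj {k : ℤ}
    (hF : ∀ (X : C) (n : ℤ), t₁.IsGE X n → t₁.IsLE X n →
      t₂.IsGE (F.obj X) n ∧ t₂.IsLE (F.obj X) (n + k))
    {a b : ℤ} (hab : a ≤ b) (X : C) [t₁.IsGE X a] [t₁.IsLE X b] :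
    t₂.IsGE (F.obj X) a ∧ t₂.IsLE (F.obj X) (b + k) := by
  induction b, hab using Int.leInduction generalizing X with
  | base => exact hF X a inferInstance inferInstance
  | succ b _ ih =>
    have hT := F.map_distinguished _ (t₁.triangleLEGT_distinguished b X)
    obtain ⟨hGE₁, hLE₁⟩ := ih ((t₁.truncLE b).obj X)
    obtain ⟨hGE₃, hLE₃⟩ := hF ((t₁.truncGT b).obj X) (b + 1) inferInstance inferInstance
    exact ⟨t₂.isGE₂ _ hT a hGE₁ (t₂.isGE_of_ge (F.obj ((t₁.truncGT b).obj X)) a (b + 1)),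
      t₂.isLE₂ _ hT (b + 1 + k) (t₂.isLE_of_le (F.obj ((t₁.truncLE b).obj X)) (b + k) _) hLE₃⟩

end CategoryTheory.Triangulated.TStructure

namespace DerivedCategory

open CategoryTheory Limits Pretriangulated TStructure

variable {C : Type*} [Category C] [Abelian C] [HasDerivedCategory C]

lemma isIso_homologyFunctor_map_mor₁ (T : Triangle (DerivedCategory C)) (hT : T ∈ distTriang _)
    (n₀ n₁ : ℤ) (h : n₀ + 1 = n₁) (h₀ : IsZero ((homologyFunctor C n₀).obj T.obj₃))
    (h₁ : IsZero ((homologyFunctor C n₁).obj T.obj₃)) :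
    IsIso ((homologyFunctor C n₁).map T.mor₁) := by
  have : Mono ((homologyFunctor C n₁).map T.mor₁) :=
    (HomologySequence.mono_homologyMap_mor₁_iff T hT n₀ n₁ h).2 (h₀.eq_of_src _ _)
  have : Epi ((homologyFunctor C n₁).map T.mor₁) :=
    (HomologySequence.epi_homologyMap_mor₁_iff T hT n₁).2 (h₁.eq_of_tgt _ _)
  exact isIso_of_mono_of_epi _

lemma isIso_homologyFunctor_map_mor₂ (T : Triangle (DerivedCategory C)) (hT : T ∈ distTriang _)
    (n₀ n₁ : ℤ) (h : n₀ + 1 = n₁) (h₀ : IsZero ((homologyFunctor C n₀).obj T.obj₁))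
    (h₁ : IsZero ((homologyFunctor C n₁).obj T.obj₁)) :
    IsIso ((homologyFunctor C n₀).map T.mor₂) := by
  have : Mono ((homologyFunctor C n₀).map T.mor₂) :=
    (HomologySequence.mono_homologyMap_mor₂_iff T hT n₀).2 (h₀.eq_of_src _ _)
  have : Epi ((homologyFunctor C n₀).map T.mor₂) :=
    (HomologySequence.epi_homologyMap_mor₂_iff T hT n₀ n₁ h).2 (h₁.eq_of_tgt _ _)
  exact isIso_of_mono_of_epi _

lemma isIso_homologyFunctor_map_truncLEι_app (n : ℤ) (X : DerivedCategory C) :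
    IsIso ((homologyFunctor C n).map ((t.truncLEι n).app X)) :=
  isIso_homologyFunctor_map_mor₁ _ (t.triangleLEGT_distinguished n X) (n - 1) n (by lia)
    (isZero_of_isGE ((t.truncGT n).obj X) (n + 1) _ (by lia))
    (isZero_of_isGE ((t.truncGT n).obj X) (n + 1) _ (by lia))

lemma isIso_homologyFunctor_map_truncGTπ_app (n₀ n₁ : ℤ) (h : n₀ + 1 = n₁)
    (X : DerivedCategory C) :
    IsIso ((homologyFunctor C n₁).map ((t.truncGTπ n₀).app X)) :=
  isIso_homologyFunctor_map_mor₂ _ (t.triangleLEGT_distinguished n₀ X) n₁ (n₁ + 1) rfl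
    (isZero_of_isLE ((t.truncLE n₀).obj X) n₀ _ (by lia))
    (isZero_of_isLE ((t.truncLE n₀).obj X) n₀ _ (by lia))

lemma nonempty_iso_singleFunctor_obj_homology (X : DerivedCategory C) (n : ℤ)
    [X.IsGE n] [X.IsLE n] :
    Nonempty (X ≅ (singleFunctor C n).obj ((homologyFunctor C n).obj X)) := by
  obtain ⟨Y, ⟨e⟩⟩ := X.exists_iso_singleFunctor_obj_of_isGE_of_isLE n
  exact ⟨e ≪≫ (singleFunctor C n).mapIso
    ((singleFunctorCompHomologyFunctorIso C n).app Y).symm ≪≫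
      (singleFunctor C n).mapIso ((homologyFunctor C n).mapIso e.symm)⟩

variable {D : Type*} [Category D] [Abelian D] [HasDerivedCategory D]
  (F : DerivedCategory C ⥤ DerivedCategory D) [F.CommShift ℤ]

noncomputable def _root_.CategoryTheory.Functor.mapSingleFunctorObjIso (n : ℤ) (E : C) :
    F.obj ((singleFunctor C n).obj E) ≅ (F.obj ((singleFunctor C 0).obj E))⟦-n⟧ :=
  F.mapIso (((singleFunctors C).shiftIso (-n) n 0 (by lia)).app E).symm ≪≫
    (F.commShiftIso (-n)).app _

variable [F.IsTriangulated]

lemma isGE_and_isLE_map_obj {k : ℤ}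
    (hF : ∀ E : C, (F.obj ((singleFunctor C 0).obj E)).IsGE 0 ∧
      (F.obj ((singleFunctor C 0).obj E)).IsLE k)
    {a b : ℤ} (hab : a ≤ b) (X : DerivedCategory C) [X.IsGE a] [X.IsLE b] :
    (F.obj X).IsGE a ∧ (F.obj X).IsLE (b + k) := by
  refine Triangulated.TStructure.isGE_and_isLE_map_obj (t₁ := t) (t₂ := t)
    (fun Y n _ _ ↦ ?_) hab X
  obtain ⟨E, ⟨e⟩⟩ := Y.exists_iso_singleFunctor_obj_of_isGE_of_isLE n
  have e' := F.mapIso e ≪≫ F.mapSingleFunctorObjIso n E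
  obtain ⟨hGE, hLE⟩ := hF E
  have := t.isGE_shift (F.obj ((singleFunctor C 0).obj E)) 0 (-n) n
  have := t.isLE_shift (F.obj ((singleFunctor C 0).obj E)) k (-n) (n + k)
  exact ⟨t.isGE_of_iso e'.symm n, t.isLE_of_iso e'.symm (n + k)⟩

variable (hF : ∀ E : C, (F.obj ((singleFunctor C 0).obj E)).IsGE 0 ∧
  (F.obj ((singleFunctor C 0).obj E)).IsLE 2)
  (N : DerivedCategory C) [N.IsGE (-2)] [N.IsLE 0]

include hF

lemma isLE_map_singleFunctor_obj_homology_zero (hFN : (F.obj N).IsLE 0) :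
    (F.obj ((singleFunctor C 0).obj ((homologyFunctor C 0).obj N))).IsLE 0 := by
  have : ((t.truncGT (-1)).obj N).IsGE 0 := t.isGE_truncGT_obj N (-1) 0
  have := isIso_homologyFunctor_map_truncGTπ_app (-1) 0 (by lia) N
  obtain ⟨e⟩ := nonempty_iso_singleFunctor_obj_homology ((t.truncGT (-1)).obj N) 0
  have hT := rot_of_distTriang _ (F.map_distinguished _ (t.triangleLEGT_distinguished (-1) N))
  have := (isGE_and_isLE_map_obj F hF (a := -2) (b := -1) (by lia) ((t.truncLE (-1)).obj N)).2
  have : (F.obj ((t.truncGT (-1)).obj N)).IsLE 0 :=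
    t.isLE₂ _ hT 0 hFN (t.isLE_shift (F.obj ((t.truncLE (-1)).obj N)) (-1 + 2) 1 0)
  exact t.isLE_of_iso (F.mapIso (e ≪≫ (singleFunctor C 0).mapIso
    (asIso ((homologyFunctor C 0).map ((t.truncGTπ (-1)).app N))).symm)) 0

lemma isGE_map_singleFunctor_obj_homology_neg_two (hFN : (F.obj N).IsGE 0) :
    (F.obj ((singleFunctor C 0).obj ((homologyFunctor C (-2)).obj N))).IsGE 2 := by
  have := t.isGE_truncGT_obj N (-2) (-1)
  have := isIso_homologyFunctor_map_truncLEι_app (-2) N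
  obtain ⟨e⟩ := nonempty_iso_singleFunctor_obj_homology ((t.truncLE (-2)).obj N) (-2)
  have hT := inv_rot_of_distTriang _
    (F.map_distinguished _ (t.triangleLEGT_distinguished (-2) N))
  have := (isGE_and_isLE_map_obj F hF (a := -1) (b := 0) (by lia) ((t.truncGT (-2)).obj N)).1
  have : (F.obj ((t.truncLE (-2)).obj N)).IsGE 0 :=
    t.isGE₂ _ hT 0 (t.isGE_shift (F.obj ((t.truncGT (-2)).obj N)) (-1) (-1) 0) hFN
  have : ((F.obj ((singleFunctor C 0).obj ((homologyFunctor C (-2)).obj N)))⟦-(-2 : ℤ)⟧).IsGE 0 :=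
    t.isGE_of_iso (F.mapIso (e ≪≫ (singleFunctor C (-2)).mapIso
      (asIso ((homologyFunctor C (-2)).map ((t.truncLEι (-2)).app N)))) ≪≫
        F.mapSingleFunctorObjIso (-2) _) 0
  exact t.isGE_of_shift _ 2 (-(-2)) 0

end DerivedCategory

open CategoryTheory Limits Abelian

namespace TorsionPairs

universe w w' v u v' u'

variable {C : Type u} [Category.{v} C] [Abelian C]

variable {Z : Type u} [Category.{v} Z] [Abelian Z] [HasDerivedCategory.{w} Z]
variable {A : Type u'} [Category.{v'} A] [Abelian A] [HasDerivedCategory.{w'} A]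

/-- `Φ^i(E) := H^i(Φ(E)) ∈ 𝒜`, for `E ∈ 𝒵` and an equivalence
`Φ : D(𝒵) ≌ D(𝒜)` of derived categories. -/
noncomputable def PhiH (Φ : DerivedCategory Z ≌ DerivedCategory A) (i : ℤ) (E : Z) : A :=
  (DerivedCategory.homologyFunctor A i).obj
    (Φ.functor.obj ((DerivedCategory.singleFunctor Z 0).obj E))

/-- `Ψ^j(M) := H^j(Ψ(M)) ∈ 𝒵`, for `M ∈ 𝒜`, where `Ψ` is the quasi-inverse of `Φ`. -/
noncomputable def PsiH (Φ : DerivedCategory Z ≌ DerivedCategory A) (j : ℤ) (M : A) : Z :=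
  (DerivedCategory.homologyFunctor Z j).obj
    (Φ.inverse.obj ((DerivedCategory.singleFunctor A 0).obj M))

/-- `X_i := {E ∈ 𝒵 : Φ^j(E) = 0 for all j ≠ i}`. -/
def XClass (Φ : DerivedCategory Z ≌ DerivedCategory A) (i : ℤ) : Z → Prop :=
  fun E => ∀ j : ℤ, j ≠ i → IsZero (PhiH Φ j E)

/-- `B_i := {E ∈ 𝒵 : Φ^i(E) = 0}`. -/
def BClassD (Φ : DerivedCategory Z ≌ DerivedCategory A) (i : ℤ) : Z → Prop :=
  fun E => IsZero (PhiH Φ i E)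

/-- `Y_i := {M ∈ 𝒜 : Ψ^j(M) = 0 for all j ≠ i}`. -/
def YClass (Φ : DerivedCategory Z ≌ DerivedCategory A) (i : ℤ) : A → Prop :=
  fun M => ∀ j : ℤ, j ≠ i → IsZero (PsiH Φ j M)

/-- `C_i := {M ∈ 𝒜 : Ψ^i(M) = 0}`. -/
def CClass (Φ : DerivedCategory Z ≌ DerivedCategory A) (i : ℤ) : A → Prop :=
  fun M => IsZero (PsiH Φ i M)

/-- `K_0`: the class of cokernels of monomorphisms from objects of `X_2` to objects of
`X_0`, i.e. objects `E` fitting in a short exact sequence `0 → A → B → E → 0` with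
`A ∈ X_2` and `B ∈ X_0`. -/
def K0Class (Φ : DerivedCategory Z ≌ DerivedCategory A) : Z → Prop :=
  fun E => ∃ (A' B' : Z) (f : A' ⟶ B') (g : B' ⟶ E),
    XClass Φ 2 A' ∧ XClass Φ 0 B' ∧ IsShortExactSeq f g

/-- `K_2`: the class of kernels of epimorphisms from objects of `X_2` onto objects of
`X_0`, i.e. objects `E` fitting in a short exact sequence `0 → E → A → B → 0` with
`A ∈ X_2` and `B ∈ X_0`. -/
def K2Class (Φ : DerivedCategory Z ≌ DerivedCategory A) : Z → Prop :=
  fun E => ∃ (A' B' : Z) (f : E ⟶ A') (g : A' ⟶ B'),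
    XClass Φ 2 A' ∧ XClass Φ 0 B' ∧ IsShortExactSeq f g

open DerivedCategory DerivedCategory.TStructure

lemma xClass_iff (Φ : DerivedCategory Z ≌ DerivedCategory A) (i : ℤ) (E : Z) :
    XClass Φ i E ↔ (Φ.functor.obj ((singleFunctor Z 0).obj E)).IsGE i ∧
      (Φ.functor.obj ((singleFunctor Z 0).obj E)).IsLE i := by
  simp only [XClass, PhiH, isGE_iff, isLE_iff]
  refine ⟨fun h ↦ ⟨fun j hj ↦ h j hj.ne, fun j hj ↦ h j hj.ne'⟩, fun ⟨hGE, hLE⟩ j hj ↦ ?_⟩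
  rcases hj.lt_or_gt with hj | hj
  exacts [hGE j hj, hLE j hj]

/-- For every `M ∈ 𝒜`, `Ψ⁰(M) ∈ X₀` and `Ψ⁻²(M) ∈ X₂`. -/
theorem psiH_zero_mem_X0_and_psiH_neg_two_mem_X2
    (Φ : DerivedCategory Z ≌ DerivedCategory A)
    [Φ.functor.CommShift ℤ] [Φ.functor.IsTriangulated]
    (hΦ : ∀ (E : Z) (j : ℤ), j < 0 ∨ 2 < j → IsZero (PhiH Φ j E))
    (hΨ : ∀ (M : A) (j : ℤ), j < -2 ∨ 0 < j → IsZero (PsiH Φ j M)) :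
    ∀ M : A, XClass Φ 0 (PsiH Φ 0 M) ∧ XClass Φ 2 (PsiH Φ (-2) M) := by
  intro M
  have hΦ' (E : Z) : (Φ.functor.obj ((singleFunctor Z 0).obj E)).IsGE 0 ∧
      (Φ.functor.obj ((singleFunctor Z 0).obj E)).IsLE 2 :=
    ⟨(isGE_iff _ _).2 fun j hj ↦ hΦ E j (.inl hj), (isLE_iff _ _).2 fun j hj ↦ hΦ E j (.inr hj)⟩
  set N := Φ.inverse.obj ((singleFunctor A 0).obj M)
  have : N.IsGE (-2) := (isGE_iff _ _).2 fun j hj ↦ hΨ M j (.inl hj)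
  have : N.IsLE 0 := (isLE_iff _ _).2 fun j hj ↦ hΨ M j (.inr hj)
  have eΦN : Φ.functor.obj N ≅ (singleFunctor A 0).obj M := Φ.counitIso.app _
  refine ⟨(xClass_iff Φ 0 _).2 ⟨(hΦ' _).1, ?_⟩, (xClass_iff Φ 2 _).2 ⟨?_, (hΦ' _).2⟩⟩
  · exact isLE_map_singleFunctor_obj_homology_zero Φ.functor hΦ' N (t.isLE_of_iso eΦN.symm 0)
  · exact isGE_map_singleFunctor_obj_homology_neg_two Φ.functor hΦ' N (t.isGE_of_iso eΦN.symm 0)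

end TorsionPairs
end
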